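/- arXiv:2111.07920 — 5 statements merged into one kernel-verified Lean document; each statement's English description precedes it below -/
import Mathlib

section
/- Every positive solution u of the ODE u''/(1+u'²) = 1/u on an open interval is of the form u(x) = (1/a)·cosh(a x + b) for some constants a ≠ 0 and b. -/
/-!
Multiplying the equation by `2u'/u³` shows that `(1 + u'²)/u²` is a first integral, so
`√(1 + u'²) = a u` for a constant `a > 0`. Then `(arsinh u')' = u''/√(1 + u'²) = a`, hence
`u' = sinh (a x + b)` and `u = √(1 + u'²)/a = cosh (a x + b)/a`.
-/

open Real Set

theorem IsOpen.exists_eq_add_of_hasDerivAt {s : Set ℝ} (hs : IsOpen s) (hs' : IsPreconnected s)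
    {f f' g : ℝ → ℝ} (hf : ∀ x ∈ s, HasDerivAt f (f' x) x) (hg : ∀ x ∈ s, HasDerivAt g (f' x) x) :
    ∃ b, ∀ x ∈ s, f x = g x + b :=
  hs.exists_eq_add_of_deriv_eq hs'
    (fun x hx => (hf x hx).differentiableAt.differentiableWithinAt)
    (fun x hx => (hg x hx).differentiableAt.differentiableWithinAt)
    (fun x hx => (hf x hx).deriv.trans (hg x hx).deriv.symm)

theorem IsOpen.eq_of_hasDerivAt_zero {s : Set ℝ} (hs : IsOpen s) (hs' : IsPreconnected s)
    {f : ℝ → ℝ} (hf : ∀ x ∈ s, HasDerivAt f 0 x) {x y : ℝ} (hx : x ∈ s) (hy : y ∈ s) :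
    f x = f y :=
  hs.is_const_of_deriv_eq_zero hs' (fun z hz => (hf z hz).differentiableAt.differentiableWithinAt)
    (fun z hz => (hf z hz).deriv) hx hy

theorem ContDiffOn.hasDerivAt_deriv_and_deriv_deriv {s : Set ℝ} {f : ℝ → ℝ}
    (hf : ContDiffOn ℝ 2 f s) (hs : IsOpen s) {x : ℝ} (hx : x ∈ s) :
    HasDerivAt f (deriv f x) x ∧ HasDerivAt (deriv f) (deriv (deriv f) x) x :=
  ⟨((hf.contDiffAt (hs.mem_nhds hx)).differentiableAt (by norm_num)).hasDerivAt,
    (((hf.deriv_of_isOpen (m := 1) hs (by norm_num)).contDiffAt (hs.mem_nhds hx)).differentiableAt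
      (by norm_num)).hasDerivAt⟩

section Catenary

variable {u u' u'' : ℝ → ℝ} {x : ℝ}

theorem hasDerivAt_catenary_firstIntegral (hu : HasDerivAt u (u' x) x)
    (hu' : HasDerivAt u' (u'' x) x) (hux : u x ≠ 0) (hode : u'' x * u x = 1 + u' x ^ 2) :
    HasDerivAt (fun y => (1 + u' y ^ 2) / u y ^ 2) 0 x := by
  refine (((hu'.fun_pow 2).const_add 1).div (hu.fun_pow 2) (pow_ne_zero 2 hux)).congr_deriv ?_
  rw [div_eq_zero_iff]
  left
  linear_combination (2 * u' x * u x) * hode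

theorem hasDerivAt_arsinh_of_sqrt_eq_mul {c : ℝ} (hu' : HasDerivAt u' (u'' x) x)
    (hsqrt : √(1 + u' x ^ 2) = c * u x) (hode : u'' x * u x = 1 + u' x ^ 2) :
    HasDerivAt (fun y => arsinh (u' y)) c x := by
  refine ((hasDerivAt_arsinh _).comp x hu').congr_deriv ?_
  have hcu : c * u x ≠ 0 := hsqrt ▸ (sqrt_pos.2 (by positivity)).ne'
  have hsq : 1 + u' x ^ 2 = (c * u x) ^ 2 := by
    rw [← hsqrt, sq_sqrt (by positivity)]
  have hux : u x ≠ 0 := right_ne_zero_of_mul hcu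
  rw [hsqrt, eq_div_of_mul_eq hux hode, hsq]
  field_simp

end Catenary

theorem sqrt_one_add_sq_eq_sqrt_mul {p v k : ℝ} (hv : 0 < v) (h : (1 + p ^ 2) / v ^ 2 = k) :
    √(1 + p ^ 2) = √k * v := by
  rw [← h, sqrt_div' _ (sq_nonneg v), sqrt_sq hv.le, div_mul_cancel₀ _ hv.ne']

theorem eq_one_div_mul_cosh_of_sqrt_eq_mul {p v c t : ℝ} (hc : c ≠ 0) (hp : arsinh p = t)
    (hv : √(1 + p ^ 2) = c * v) : v = 1 / c * cosh t := by
  rw [← hp, cosh_arsinh, hv]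
  field_simp

/-- every positive C² solution of `u''·u = 1 + u'²` on an open interval
is a catenary `u(x) = (1/a)·cosh(a x + b)` for some `a ≠ 0` and `b`. -/
theorem stmt3 (I : Set ℝ) (hI : IsOpen I) (hconn : IsPreconnected I) (hne : I.Nonempty)
    (u : ℝ → ℝ) (hreg : ContDiffOn ℝ 2 u I) (hpos : ∀ x ∈ I, 0 < u x)
    (hode : ∀ x ∈ I, deriv (deriv u) x * u x = 1 + (deriv u x) ^ 2) :
    ∃ a b : ℝ, a ≠ 0 ∧ ∀ x ∈ I, u x = (1 / a) * Real.cosh (a * x + b) := by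
  obtain ⟨x₀, hx₀⟩ := hne
  have hderiv (x) (hx : x ∈ I) := hreg.hasDerivAt_deriv_and_deriv_deriv hI hx
  set k := (1 + deriv u x₀ ^ 2) / u x₀ ^ 2
  have hk : 0 < k := by have := hpos x₀ hx₀; positivity
  have hfirst (x) (hx : x ∈ I) : (1 + deriv u x ^ 2) / u x ^ 2 = k :=
    hI.eq_of_hasDerivAt_zero hconn (fun y hy => hasDerivAt_catenary_firstIntegral
      (hderiv y hy).1 (hderiv y hy).2 (hpos y hy).ne' (hode y hy)) hx hx₀
  have hsqrt (x) (hx : x ∈ I) : √(1 + deriv u x ^ 2) = √k * u x :=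
    sqrt_one_add_sq_eq_sqrt_mul (hpos x hx) (hfirst x hx)
  obtain ⟨b, hb⟩ := hI.exists_eq_add_of_hasDerivAt hconn
    (fun x hx => hasDerivAt_arsinh_of_sqrt_eq_mul (hderiv x hx).2 (hsqrt x hx) (hode x hx))
    (fun x _ => (hasDerivAt_id x).const_mul √k |>.congr_deriv (mul_one _))
  exact ⟨√k, b, (sqrt_pos.2 hk).ne', fun x hx =>
    eq_one_div_mul_cosh_of_sqrt_eq_mul (sqrt_pos.2 hk).ne' (hb x hx) (hsqrt x hx)⟩
end

section
/- If u : Ω → ℝ is a positive C² function on a bounded open domain Ω satisfying the singular minimal surface equation and u extends continuously to the closure of Ω, then sup over the closure of Ω of u is attained on the boundary ∂Ω; equivalently, the graph of u lies below the plane z = max_{∂Ω} u. -/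
/-!
At an interior maximum point the gradient of `u` vanishes and `u_xx, u_yy ≤ 0`, while the
equation there reduces to `u_xx + u_yy = 1 / u > 0`. Hence the maximum over the compact closure
is attained on the boundary.
-/

open Set Filter Topology

theorem IsLocalMax.deriv_deriv_nonpos {f : ℝ → ℝ} {a : ℝ} (h : IsLocalMax f a)
    (hc : ContinuousAt f a) : deriv (deriv f) a ≤ 0 := by
  by_contra! hpos
  -- a positive second derivative makes `a` also a local minimum, so `f` is locally constant
  have hmin : IsLocalMin f a := isLocalMin_of_deriv_deriv_pos hpos h.deriv_eq_zero hc
  have hconst : f =ᶠ[𝓝 a] fun _ => f a :=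
    (hmin.and h).mono fun x hx => le_antisymm hx.2 hx.1
  have hderiv : deriv f =ᶠ[𝓝 a] fun _ => 0 :=
    hconst.eventuallyEq_nhds.mono fun x hx => by rw [hx.deriv_eq, deriv_const]
  rw [hderiv.deriv_eq, deriv_const] at hpos
  exact lt_irrefl 0 hpos

theorem IsLocalMax.fderiv_fderiv_apply_nonpos {E : Type*} [NormedAddCommGroup E]
    [NormedSpace ℝ E] {u : E → ℝ} {p : E} (h : IsLocalMax u p) (hu : ContDiffAt ℝ 2 u p)
    (e : E) : fderiv ℝ (fun q => fderiv ℝ u q e) p e ≤ 0 := by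
  set L : ℝ → E := fun t => p + t • e
  have hL : ∀ t, HasDerivAt L e t := fun t => by
    simpa [L] using ((hasDerivAt_id t).smul_const e).const_add p
  have hL0 : L 0 = p := by simp [L]
  have hLp : Tendsto L (𝓝 0) (𝓝 (L 0)) := (hL 0).continuousAt.tendsto
  rw [← hL0] at h hu ⊢
  have hderiv : deriv (u ∘ L) =ᶠ[𝓝 0] fun t => fderiv ℝ u (L t) e := by
    filter_upwards [hLp.eventually (hu.eventually (by simp))] with t ht
    exact ((ht.differentiableAt (by simp)).hasFDerivAt.comp_hasDerivAt t (hL t)).deriv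
  have hu' : DifferentiableAt ℝ (fun q => fderiv ℝ u q e) (L 0) :=
    ((hu.fderiv_right (m := 1) le_rfl).differentiableAt one_ne_zero).clm_apply
      (differentiableAt_const e)
  have hsecond : deriv (deriv (u ∘ L)) 0 = fderiv ℝ (fun q => fderiv ℝ u q e) (L 0) e := by
    rw [hderiv.deriv_eq]
    exact (hu'.hasFDerivAt.comp_hasDerivAt 0 (hL 0)).deriv
  have hmax : IsLocalMax (u ∘ L) 0 := h.comp_tendsto hLp
  rw [← hsecond]
  exact hmax.deriv_deriv_nonpos
    ((hu.differentiableAt (by simp)).continuousAt.comp (hL 0).continuousAt)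

noncomputable def pdx (u : ℝ × ℝ → ℝ) (p : ℝ × ℝ) : ℝ := fderiv ℝ u p (1, 0)
noncomputable def pdy (u : ℝ × ℝ → ℝ) (p : ℝ × ℝ) : ℝ := fderiv ℝ u p (0, 1)

/-- a positive solution of the singular minimal surface equation on a
bounded open domain, continuous up to the closure, attains its maximum over the
closure at a boundary point: the graph lies below the plane `z = max_{∂Ω} u`. -/
theorem stmt5 (Ω : Set (ℝ × ℝ)) (hΩ : IsOpen Ω) (hbd : Bornology.IsBounded Ω)
    (hne : Ω.Nonempty) (u : ℝ × ℝ → ℝ)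
    (hcont : ContinuousOn u (closure Ω))
    (hreg : ContDiffOn ℝ 2 u Ω) (hpos : ∀ p ∈ Ω, 0 < u p)
    (hpde : ∀ p ∈ Ω,
      (1 + (pdy u p) ^ 2) * pdx (pdx u) p - 2 * pdx u p * pdy u p * pdy (pdx u) p +
          (1 + (pdx u p) ^ 2) * pdy (pdy u) p
        = (1 + (pdx u p) ^ 2 + (pdy u p) ^ 2) / u p) :
    ∃ p ∈ frontier Ω, ∀ q ∈ closure Ω, u q ≤ u p := by
  obtain ⟨p, hp_cl, hp_max⟩ := hbd.isCompact_closure.exists_isMaxOn hne.closure hcont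
  refine ⟨p, ?_, fun q hq => hp_max hq⟩
  rw [hΩ.frontier_eq]
  refine ⟨hp_cl, fun hp => ?_⟩
  have hloc : IsLocalMax u p :=
    mem_of_superset (hΩ.mem_nhds hp) fun q hq => hp_max (subset_closure hq)
  have hu : ContDiffAt ℝ 2 u p := hreg.contDiffAt (hΩ.mem_nhds hp)
  have hgrad : fderiv ℝ u p = 0 := hloc.fderiv_eq_zero
  have hx : pdx u p = 0 := by simp [pdx, hgrad]
  have hy : pdy u p = 0 := by simp [pdy, hgrad]
  have hxx : pdx (pdx u) p ≤ 0 := hloc.fderiv_fderiv_apply_nonpos hu _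
  have hyy : pdy (pdy u) p ≤ 0 := hloc.fderiv_fderiv_apply_nonpos hu _
  have hlap := hpde p hp
  rw [hx, hy] at hlap
  have hrhs : 0 < 1 / u p := one_div_pos.2 (hpos p hp)
  linarith
end

section
/- Suppose a surface of revolution about the z-axis, parametrized by X(r,θ) = (r cos θ, r sin θ, u(r)), satisfies the singular minimal surface equation H = ⟨N, v⟩/⟨X, v⟩ for a unit vector v = (a₁, a₂, a₃). Then either a₁ = a₂ = 0 (the gravity direction is parallel to the rotation axis) and u satisfies u''/(1+u'²) = 1/u − u'/r, or a₃ = 0 (the gravity direction is orthogonal to the rotation axis) and u satisfies u''/(1+u'²) = −2u'/r. -/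
/-!
On the rotational graph, the singular minimal surface equation reduces, after multiplying by
`√(1+u'²)`, to
`u'/r + u''/(1+u'²) = (a₃ - u' A(θ)) / (r A(θ) + a₃ u)` with `A(θ) = a₁ cos θ + a₂ sin θ`.
If `A ≡ 0` this is the first ODE. Otherwise `A` takes both the value `0` and a nonzero value, and
comparing these two angles gives `u'/r + u''/(1+u'²) = -u'/r`, the second ODE, and, when `a₃ ≠ 0`,
`u u' = -r`. The latter is impossible: differentiating gives `u u'' + u'² = -1`, whereas the
second ODE together with `u' = -r/u < 0` forces `u'' > 0`.
-/

open Real Filter Topology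

theorem exists_mul_cos_add_mul_sin_eq_zero (a b : ℝ) : ∃ θ, a * cos θ + b * sin θ = 0 := by
  have hcont : ContinuousOn (fun θ => a * cos θ + b * sin θ) (Set.uIcc 0 π) := by fun_prop
  have hzero : (0 : ℝ) ∈ Set.uIcc a (-a) := by
    rcases le_total 0 a with ha | ha
    · exact Set.mem_uIcc.2 (Or.inr ⟨by linarith, ha⟩)
    · exact Set.mem_uIcc.2 (Or.inl ⟨ha, by linarith⟩)
  obtain ⟨θ, -, hθ⟩ := intermediate_value_uIcc hcont (by simpa using hzero)
  exact ⟨θ, hθ⟩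

theorem exists_mul_cos_add_mul_sin_ne_zero {a b : ℝ} (h : ¬(a = 0 ∧ b = 0)) :
    ∃ θ, a * cos θ + b * sin θ ≠ 0 := by
  by_cases ha : a = 0
  · exact ⟨π / 2, by simpa [ha] using h⟩
  · exact ⟨0, by simpa using ha⟩

theorem mul_mul_eq_self_of_eq_div {K c U : ℝ} (hU : U ≠ 0) (h : K = c / (c * U)) :
    K * (c * U) = c := by
  rcases eq_or_ne c 0 with rfl | hc
  · simp
  · rw [h, div_mul_cancel₀ _ (mul_ne_zero hc hU)]

theorem mul_eq_neg_of_eq_div_of_eq_div {K c w r t U : ℝ} (hr : r ≠ 0) (hU : U ≠ 0) (ht : t ≠ 0)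
    (h₀ : K = c / (c * U)) (h₁ : K = (c - w * t) / (r * t + c * U)) : K * r = -w := by
  have hKc := mul_mul_eq_self_of_eq_div hU h₀
  have hden : r * t + c * U ≠ 0 := by
    intro hzero
    rw [hzero, div_zero] at h₁
    have hc : c = 0 := by rw [← hKc, h₁, zero_mul]
    simp_all
  rw [eq_div_iff hden] at h₁
  exact mul_right_cancel₀ ht (by linear_combination h₁ - hKc)

/-- With `w, w', U` standing for `u'(r), u''(r), u(r)`, the left side is `H √(1 + u'²)`. -/
theorem rotational_singular_minimal_eq {r w w' U a₁ a₂ a₃ θ : ℝ} (hr : 0 < r)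
    (h : (w * (1 + w ^ 2) + r * w') / (r * (√(1 + w ^ 2)) ^ 3)
      = (-a₁ * w * cos θ - a₂ * w * sin θ + a₃) /
          (√(1 + w ^ 2) * (a₁ * r * cos θ + a₂ * r * sin θ + a₃ * U))) :
    w / r + w' / (1 + w ^ 2)
      = (a₃ - w * (a₁ * cos θ + a₂ * sin θ)) / (r * (a₁ * cos θ + a₂ * sin θ) + a₃ * U) := by
  have hw : 0 < 1 + w ^ 2 := by positivity
  have hs : 0 < √(1 + w ^ 2) := sqrt_pos.2 hw
  have hs3 : √(1 + w ^ 2) ^ 3 = (1 + w ^ 2) * √(1 + w ^ 2) := by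
    rw [pow_succ, sq_sqrt hw.le]
  have hlhs : w / r + w' / (1 + w ^ 2)
      = (w * (1 + w ^ 2) + r * w') / (r * √(1 + w ^ 2) ^ 3) * √(1 + w ^ 2) := by
    rw [hs3]; field_simp
  rw [hlhs, h, div_mul_eq_mul_div, mul_comm, mul_div_mul_left _ _ hs.ne']
  ring_nf

theorem deriv_deriv_mul_add_sq_eq_neg_one {u : ℝ → ℝ} {x : ℝ} (hu : DifferentiableAt ℝ u x)
    (hu' : DifferentiableAt ℝ (deriv u) x) (h : ∀ᶠ y in 𝓝 x, deriv u y * u y = -y) :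
    deriv (deriv u) x * u x + deriv u x ^ 2 = -1 := by
  have hprod := hu'.hasDerivAt.mul hu.hasDerivAt
  have hneg : HasDerivAt (fun y => deriv u y * u y) (-1) x :=
    (hasDerivAt_neg x).congr_of_eventuallyEq h
  rw [sq]; exact hprod.unique hneg

theorem not_eventually_deriv_mul_eq_neg {u : ℝ → ℝ} {x : ℝ} (hx : 0 < x) (hux : 0 < u x)
    (hu : DifferentiableAt ℝ u x) (hu' : DifferentiableAt ℝ (deriv u) x)
    (hode : deriv (deriv u) x / (1 + deriv u x ^ 2) = -2 * deriv u x / x) :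
    ¬∀ᶠ y in 𝓝 x, deriv u y * u y = -y := by
  intro h
  have hsum := deriv_deriv_mul_add_sq_eq_neg_one hu hu' h
  have hneg : deriv u x < 0 := by nlinarith [h.self_of_nhds]
  have hpos : 0 < deriv (deriv u) x := by
    rw [div_eq_div_iff (by positivity) hx.ne'] at hode
    nlinarith [sq_nonneg (deriv u x)]
  nlinarith [mul_pos hpos hux, sq_nonneg (deriv u x)]

/-- if the rotational surface `X(r,θ) = (r cos θ, r sin θ, u(r))`
satisfies the singular minimal surface equation `H = ⟨N,v⟩/⟨X,v⟩` for a unit vector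
`v = (a₁,a₂,a₃)` — i.e. `H·⟨X,v⟩ = ⟨N,v⟩` holds for all `θ`, where
`H = (u'(1+u'²)+ru'')/(r(1+u'²)^{3/2})` and `N = (−u'cosθ, −u'sinθ, 1)/√(1+u'²)` —
then either `a₁ = a₂ = 0` and `u''/(1+u'²) = 1/u − u'/r`, or `a₃ = 0` and
`u''/(1+u'²) = −2u'/r`. -/
theorem stmt12 (I : Set ℝ) (hI : IsOpen I) (hne : I.Nonempty) (hIpos : I ⊆ Set.Ioi 0)
    (u : ℝ → ℝ) (hreg : ContDiffOn ℝ 2 u I) (hpos : ∀ r ∈ I, 0 < u r)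
    (a₁ a₂ a₃ : ℝ) (hunit : a₁ ^ 2 + a₂ ^ 2 + a₃ ^ 2 = 1)
    (hsms : ∀ r ∈ I, ∀ θ : ℝ,
      (deriv u r * (1 + (deriv u r) ^ 2) + r * deriv (deriv u) r) /
          (r * (Real.sqrt (1 + (deriv u r) ^ 2)) ^ 3)
        = (-a₁ * deriv u r * Real.cos θ - a₂ * deriv u r * Real.sin θ + a₃) /
            (Real.sqrt (1 + (deriv u r) ^ 2) *
              (a₁ * r * Real.cos θ + a₂ * r * Real.sin θ + a₃ * u r))) :
    (a₁ = 0 ∧ a₂ = 0 ∧ ∀ r ∈ I,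
        deriv (deriv u) r / (1 + (deriv u r) ^ 2) = 1 / u r - deriv u r / r) ∨
    (a₃ = 0 ∧ ∀ r ∈ I,
        deriv (deriv u) r / (1 + (deriv u r) ^ 2) = -2 * deriv u r / r) := by
  have hK r (hr : r ∈ I) θ := rotational_singular_minimal_eq (hIpos hr) (hsms r hr θ)
  by_cases h₁₂ : a₁ = 0 ∧ a₂ = 0
  · obtain ⟨rfl, rfl⟩ := h₁₂
    have ha₃ : a₃ ≠ 0 := by rintro rfl; norm_num at hunit
    refine .inl ⟨rfl, rfl, fun r hr => ?_⟩
    have hKu := mul_mul_eq_self_of_eq_div (hpos r hr).ne' (by simpa using hK r hr 0)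
    have hr₀ : r ≠ 0 := (hIpos hr).ne'
    have hu₀ : u r ≠ 0 := (hpos r hr).ne'
    field_simp at hKu ⊢
    linear_combination hKu
  obtain ⟨θ₀, hθ₀⟩ := exists_mul_cos_add_mul_sin_eq_zero a₁ a₂
  obtain ⟨θ₁, hθ₁⟩ := exists_mul_cos_add_mul_sin_ne_zero h₁₂
  have hKr r (hr : r ∈ I) :=
    mul_eq_neg_of_eq_div_of_eq_div (hIpos hr).ne' (hpos r hr).ne' hθ₁
      (by simpa [hθ₀] using hK r hr θ₀) (hK r hr θ₁)
  have hode r (hr : r ∈ I) : deriv (deriv u) r / (1 + deriv u r ^ 2) = -2 * deriv u r / r := by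
    have hr₀ : r ≠ 0 := (hIpos hr).ne'
    have h := hKr r hr
    rw [add_mul, div_mul_cancel₀ _ hr₀] at h
    rw [eq_div_iff hr₀]
    linear_combination h
  refine .inr ⟨?_, hode⟩
  by_contra ha₃
  have hprod r (hr : r ∈ I) : deriv u r * u r = -r := by
    have hKu := mul_mul_eq_self_of_eq_div (hpos r hr).ne' (by simpa [hθ₀] using hK r hr θ₀)
    refine mul_left_cancel₀ ha₃ ?_
    linear_combination a₃ * u r * hKr r hr - r * hKu
  obtain ⟨r, hr⟩ := hne
  exact not_eventually_deriv_mul_eq_neg (hIpos hr) (hpos r hr)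
    (hreg.differentiableOn (by norm_num) |>.differentiableAt (hI.mem_nhds hr))
    ((hreg.deriv_of_isOpen (m := 1) hI (by norm_num)).differentiableOn one_ne_zero
      |>.differentiableAt (hI.mem_nhds hr))
    (hode r hr) (eventually_of_mem (hI.mem_nhds hr) hprod)
end

section
/- Let u be a non-constant positive C² solution of u''/(1+u'²) = 2/u on an open interval. Then there exists a constant c ≠ 0 such that u'² = c²u⁴ − 1 throughout the interval. -/
/-!
Multiplying `u'' u = n (1 + u'²)` by `2 u' / u^(2n+1)` turns it into
`((1 + u'²) / u^(2n))' = 0`, so this quantity is constant on the interval; for `n = 2` and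
positive `u` it is a positive constant `c²`, which is the claimed first integral.
-/

open Set

noncomputable def catenaryFirstIntegral (n : ℕ) (u : ℝ → ℝ) (x : ℝ) : ℝ :=
  (1 + deriv u x ^ 2) / u x ^ (2 * n)

theorem hasDerivAt_catenaryFirstIntegral {n : ℕ} {u : ℝ → ℝ} {x : ℝ}
    (hu : DifferentiableAt ℝ u x) (hu' : DifferentiableAt ℝ (deriv u) x) (hux : u x ≠ 0)
    (hode : deriv (deriv u) x * u x = n * (1 + deriv u x ^ 2)) :
    HasDerivAt (catenaryFirstIntegral n u) 0 x := by
  have hnum := (hu'.hasDerivAt.fun_pow 2).const_add 1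
  have hden := hu.hasDerivAt.fun_pow (2 * n)
  refine (hnum.fun_div hden (pow_ne_zero _ hux)).congr_deriv ?_
  rw [div_eq_zero_iff]
  left
  rcases n with _ | k
  · simp_all
  · rw [show 2 * (k + 1) - 1 = 2 * k + 1 by omega]
    push_cast at hode ⊢
    linear_combination 2 * deriv u x * u x ^ (2 * k + 1) * hode

theorem catenaryFirstIntegral_eq_of_mem {n : ℕ} {u : ℝ → ℝ} {s : Set ℝ} (hs : IsOpen s)
    (hs' : IsPreconnected s) (hreg : ContDiffOn ℝ 2 u s) (hne : ∀ x ∈ s, u x ≠ 0)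
    (hode : ∀ x ∈ s, deriv (deriv u) x * u x = n * (1 + deriv u x ^ 2)) {x y : ℝ}
    (hx : x ∈ s) (hy : y ∈ s) : catenaryFirstIntegral n u x = catenaryFirstIntegral n u y := by
  have hreg' : ContDiffOn ℝ 1 (deriv u) s := hreg.deriv_of_isOpen hs (by norm_num)
  have hderiv (z : ℝ) (hz : z ∈ s) : HasDerivAt (catenaryFirstIntegral n u) 0 z :=
    hasDerivAt_catenaryFirstIntegral
      ((hreg.contDiffAt (hs.mem_nhds hz)).differentiableAt (by norm_num))
      ((hreg'.contDiffAt (hs.mem_nhds hz)).differentiableAt (by norm_num)) (hne z hz) (hode z hz)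
  exact hs.is_const_of_deriv_eq_zero hs'
    (fun z hz => (hderiv z hz).differentiableAt.differentiableWithinAt)
    (fun z hz => (hderiv z hz).deriv) hx hy

theorem stmt16_general (a b : ℝ) (u : ℝ → ℝ)
    (hreg : ContDiffOn ℝ 2 u (Set.Ioo a b))
    (hpos : ∀ x ∈ Set.Ioo a b, 0 < u x)
    (hode : ∀ x ∈ Set.Ioo a b, deriv (deriv u) x * u x = 2 * (1 + (deriv u x) ^ 2)) :
    ∃ c : ℝ, c ≠ 0 ∧ ∀ x ∈ Set.Ioo a b, (deriv u x) ^ 2 = c ^ 2 * (u x) ^ 4 - 1 := by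
  obtain hempty | ⟨x₀, hx₀⟩ := (Ioo a b).eq_empty_or_nonempty
  · exact ⟨1, one_ne_zero, by simp [hempty]⟩
  have hconst (x : ℝ) (hx : x ∈ Ioo a b) :
      catenaryFirstIntegral 2 u x = catenaryFirstIntegral 2 u x₀ :=
    catenaryFirstIntegral_eq_of_mem isOpen_Ioo isPreconnected_Ioo hreg
      (fun z hz => (hpos z hz).ne') (fun z hz => by exact_mod_cast hode z hz) hx hx₀
  have hpos₀ : 0 < catenaryFirstIntegral 2 u x₀ := by
    have := hpos x₀ hx₀
    unfold catenaryFirstIntegral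
    positivity
  refine ⟨√(catenaryFirstIntegral 2 u x₀), (Real.sqrt_pos.2 hpos₀).ne', fun x hx => ?_⟩
  have hux := (hpos x hx).ne'
  rw [Real.sq_sqrt hpos₀.le, ← hconst x hx, catenaryFirstIntegral]
  field_simp
  ring

/-- a non-constant positive C² solution of the 2-catenary equation
`u''·u = 2(1+u'²)` on an open interval satisfies the first integral
`u'² = c²u⁴ − 1` for some constant `c ≠ 0`. -/
theorem stmt16 (a b : ℝ) (hab : a < b) (u : ℝ → ℝ)
    (hreg : ContDiffOn ℝ 2 u (Set.Ioo a b))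
    (hpos : ∀ x ∈ Set.Ioo a b, 0 < u x)
    (hnc : ¬ ∀ x ∈ Set.Ioo a b, ∀ y ∈ Set.Ioo a b, u x = u y)
    (hode : ∀ x ∈ Set.Ioo a b, deriv (deriv u) x * u x = 2 * (1 + (deriv u x) ^ 2)) :
    ∃ c : ℝ, c ≠ 0 ∧ ∀ x ∈ Set.Ioo a b, (deriv u x) ^ 2 = c ^ 2 * (u x) ^ 4 - 1 :=
  stmt16_general a b u hreg hpos hode
end

section
/- The maximal interval of existence (−a, a) of the solution to u''/(1+u'²) = 2/u with u(0) = u₀ > 0, u'(0) = 0 is bounded, and u(x) → ∞ as x → a⁻. -/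
/-!
Along the solution the slope `p = u'` is a good parameter. The first integral
`√(1 + u'²) = (u / u₀)²` gives `u = u₀ (1 + p²)^(1/4)`, and then the equation says
`dx/dp = u / (2 (1 + p²)) = (u₀ / 2) (1 + p²)^(-3/4)`. This is even, positive and integrable (it
decays like `|p|^(-3/2)`), so `x(p) = ∫₀ᵖ dx/dp` is an increasing bijection from `ℝ` onto
`(-a, a)` with `a = ∫₀^∞ dx/dp < ∞`. The solution is `u = u₀ (1 + p(x)²)^(1/4)` with `p` the
inverse of `x(p)`, and `p(x) → ∞` as `x → a⁻`.
-/

open Filter MeasureTheory Set Topology Function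

section Primitive

variable {φ : ℝ → ℝ}

noncomputable def primitiveFromZero (φ : ℝ → ℝ) (p : ℝ) : ℝ := ∫ q in (0 : ℝ)..p, φ q

@[simp]
lemma primitiveFromZero_zero : primitiveFromZero φ 0 = 0 := intervalIntegral.integral_same

lemma hasDerivAt_primitiveFromZero (hφ : Continuous φ) (p : ℝ) :
    HasDerivAt (primitiveFromZero φ) (φ p) p :=
  (hφ.integral_hasStrictDerivAt 0 p).hasDerivAt

lemma primitiveFromZero_neg (heven : φ.Even) (p : ℝ) :
    primitiveFromZero φ (-p) = -primitiveFromZero φ p := by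
  have h := intervalIntegral.integral_comp_neg (a := 0) (b := p) φ
  simp only [show ∀ q, φ (-q) = φ q from heven, neg_zero] at h
  rw [primitiveFromZero, primitiveFromZero, h, intervalIntegral.integral_symm]

lemma tendsto_primitiveFromZero_atTop (hint : IntegrableOn φ (Ioi 0)) :
    Tendsto (primitiveFromZero φ) atTop (𝓝 (∫ q in Ioi 0, φ q)) :=
  intervalIntegral_tendsto_integral_Ioi 0 hint tendsto_id

lemma strictMono_primitiveFromZero (hφ : Continuous φ) (hpos : ∀ q, 0 < φ q) :
    StrictMono (primitiveFromZero φ) :=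
  strictMono_of_hasDerivAt_pos (hasDerivAt_primitiveFromZero hφ) hpos

lemma primitiveFromZero_lt_integral_Ioi (hφ : Continuous φ) (hpos : ∀ q, 0 < φ q)
    (hint : IntegrableOn φ (Ioi 0)) (p : ℝ) :
    primitiveFromZero φ p < ∫ q in Ioi 0, φ q :=
  have hmono := strictMono_primitiveFromZero hφ hpos
  (hmono (lt_add_one p)).trans_le
    (hmono.monotone.ge_of_tendsto (tendsto_primitiveFromZero_atTop hint) _)

lemma Ioo_subset_range_primitiveFromZero (hφ : Continuous φ) (heven : φ.Even)
    (hint : IntegrableOn φ (Ioi 0)) :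
    Ioo (-∫ q in Ioi 0, φ q) (∫ q in Ioi 0, φ q) ⊆ range (primitiveFromZero φ) := by
  intro c ⟨hlo, hhi⟩
  have hlim := tendsto_primitiveFromZero_atTop hint
  obtain ⟨p, hp⟩ := (hlim.eventually (eventually_gt_nhds (neg_lt.1 hlo))).exists
  obtain ⟨r, hr⟩ := (hlim.eventually (eventually_gt_nhds hhi)).exists
  refine mem_range_of_exists_le_of_exists_ge
    (continuous_iff_continuousAt.2 fun p => (hasDerivAt_primitiveFromZero hφ p).continuousAt)
    ⟨-p, ?_⟩ ⟨r, hr.le⟩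
  rw [primitiveFromZero_neg heven]
  linarith

end Primitive

section Inverse

variable {F f : ℝ → ℝ} {s : Set ℝ} {x : ℝ}

lemma strictMonoOn_invFun (hF : StrictMono F) (hsF : s ⊆ range F) :
    StrictMonoOn (invFun F) s := fun x hx y hy hxy => by
  rw [← hF.lt_iff_lt, invFun_eq (hsF hx), invFun_eq (hsF hy)]
  exact hxy

lemma continuousAt_invFun (hF : StrictMono F) (hFc : Continuous F) (hs : IsOpen s)
    (hsF : s ⊆ range F) (hx : x ∈ s) : ContinuousAt (invFun F) x := by
  refine (strictMonoOn_invFun hF hsF).continuousAt_of_image_mem_nhds (hs.mem_nhds hx) ?_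
  have hpre : F ⁻¹' s ⊆ invFun F '' s := fun p hp =>
    ⟨F p, hp, leftInverse_invFun hF.injective p⟩
  refine mem_of_superset ((hs.preimage hFc).mem_nhds ?_) hpre
  rw [mem_preimage, invFun_eq (hsF hx)]
  exact hx

lemma hasDerivAt_invFun (hF : ∀ p, HasDerivAt F (f p) p) (hpos : ∀ p, 0 < f p)
    (hs : IsOpen s) (hsF : s ⊆ range F) (hx : x ∈ s) :
    HasDerivAt (invFun F) (f (invFun F x))⁻¹ x := by
  have hmono := strictMono_of_hasDerivAt_pos hF hpos
  have hFc : Continuous F := continuous_iff_continuousAt.2 fun p => (hF p).continuousAt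
  refine HasDerivAt.of_local_left_inverse (continuousAt_invFun hmono hFc hs hsF hx)
    (hF _) (hpos _).ne' ?_
  filter_upwards [hs.mem_nhds hx] with y hy using invFun_eq (hsF hy)

lemma contDiffOn_invFun (hF : ∀ p, HasDerivAt F (f p) p) (hf : Continuous f)
    (hpos : ∀ p, 0 < f p) (hs : IsOpen s) (hsF : s ⊆ range F) :
    ContDiffOn ℝ 1 (invFun F) s := by
  have hderiv := fun x (hx : x ∈ s) => hasDerivAt_invFun hF hpos hs hsF hx
  have hdiff : DifferentiableOn ℝ (invFun F) s := fun x hx =>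
    (hderiv x hx).differentiableAt.differentiableWithinAt
  rw [show (1 : WithTop ℕ∞) = 0 + 1 from rfl, contDiffOn_succ_iff_deriv_of_isOpen hs,
    contDiffOn_zero]
  refine ⟨hdiff, by simp, ContinuousOn.congr ?_ fun x hx => (hderiv x hx).deriv⟩
  exact (hf.comp_continuousOn hdiff.continuousOn).inv₀ fun x _ => (hpos _).ne'

lemma tendsto_invFun_nhdsLT {A : ℝ} (hF : StrictMono F) (hlt : ∀ p, F p < A)
    (hrange : ∀ᶠ x in 𝓝[<] A, x ∈ range F) : Tendsto (invFun F) (𝓝[<] A) atTop := by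
  refine tendsto_atTop.2 fun M => ?_
  filter_upwards [hrange, Ioo_mem_nhdsLT (hlt M)] with x hx hM
  rw [← hF.le_iff_le, invFun_eq hx]
  exact hM.1.le

end Inverse

lemma contDiffOn_two_of_hasDerivAt {u v : ℝ → ℝ} {s : Set ℝ} (hs : IsOpen s)
    (hu : ∀ x ∈ s, HasDerivAt u (v x) x) (hv : ContDiffOn ℝ 1 v s) : ContDiffOn ℝ 2 u s := by
  rw [show (2 : WithTop ℕ∞) = 1 + 1 from rfl, contDiffOn_succ_iff_deriv_of_isOpen hs]
  exact ⟨fun x hx => (hu x hx).differentiableAt.differentiableWithinAt, by simp,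
    hv.congr fun x hx => (hu x hx).deriv⟩

namespace TwoCatenary

/- `height u₀ p` and `dxdp u₀ p` are the values of `u` and of `dx/dp` at the point where the
solution has slope `p`. -/

noncomputable def dxdp (u₀ p : ℝ) : ℝ := u₀ / 2 * (1 + p ^ 2) ^ (-(3 : ℝ) / 4)

noncomputable def height (u₀ p : ℝ) : ℝ := u₀ * (1 + p ^ 2) ^ (1 / 4 : ℝ)

variable {u₀ : ℝ}

lemma continuous_dxdp (u₀ : ℝ) : Continuous (dxdp u₀) :=
  continuous_const.mul <| (continuous_const.add (continuous_pow 2)).rpow_const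
    fun p => Or.inl (by positivity : (0 : ℝ) < 1 + p ^ 2).ne'

lemma dxdp_pos (hu₀ : 0 < u₀) (p : ℝ) : 0 < dxdp u₀ p := by
  unfold dxdp; positivity

lemma even_dxdp (u₀ : ℝ) : (dxdp u₀).Even := fun p => by
  simp only [dxdp, neg_sq]

lemma integrable_dxdp (u₀ : ℝ) : Integrable (dxdp u₀) := by
  have h := (integrable_rpow_neg_one_add_norm_sq (E := ℝ) (μ := volume) (r := 3 / 2)
    (by norm_num)).const_mul (u₀ / 2)
  convert h using 3 with p
  rw [dxdp, Real.norm_eq_abs, sq_abs]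
  norm_num

@[simp]
lemma height_zero (u₀ : ℝ) : height u₀ 0 = u₀ := by simp [height]

lemma height_pos (hu₀ : 0 < u₀) (p : ℝ) : 0 < height u₀ p := by
  unfold height; positivity

lemma height_eq_mul_dxdp (u₀ p : ℝ) : height u₀ p = 2 * (1 + p ^ 2) * dxdp u₀ p := by
  have hpos : (0 : ℝ) < 1 + p ^ 2 := by positivity
  rw [height, dxdp, show (1 / 4 : ℝ) = 1 + -(3 : ℝ) / 4 by norm_num, Real.rpow_add hpos,
    Real.rpow_one]
  ring

lemma hasDerivAt_height (u₀ p : ℝ) : HasDerivAt (height u₀) (p * dxdp u₀ p) p := by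
  have hpos : (0 : ℝ) < 1 + p ^ 2 := by positivity
  refine (((hasDerivAt_pow 2 p).const_add 1).rpow_const (p := 1 / 4) (Or.inl hpos.ne')
    |>.const_mul u₀).congr_deriv ?_
  rw [dxdp, show (1 / 4 : ℝ) - 1 = -(3 : ℝ) / 4 by norm_num]
  push_cast
  ring

lemma tendsto_height_atTop (hu₀ : 0 < u₀) : Tendsto (height u₀) atTop atTop :=
  (tendsto_rpow_atTop (by norm_num)).comp
    (tendsto_atTop_add_const_left _ 1 (tendsto_pow_atTop two_ne_zero)) |>.const_mul_atTop hu₀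

end TwoCatenary

open TwoCatenary in
/-- the maximal interval of existence `(−a,a)` of the solution of the
2-catenary equation `u''/(1+u'²) = 2/u` with `u(0) = u₀ > 0`, `u'(0) = 0`, is bounded,
and `u(x) → ∞` as `x → a⁻`. -/
theorem stmt19 (u₀ : ℝ) (hu₀ : 0 < u₀) :
    ∃ a : ℝ, 0 < a ∧ ∃ u : ℝ → ℝ,
      ContDiffOn ℝ 2 u (Set.Ioo (-a) a) ∧
      (∀ x ∈ Set.Ioo (-a) a, 0 < u x ∧
        deriv (deriv u) x * u x = 2 * (1 + (deriv u x) ^ 2)) ∧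
      u 0 = u₀ ∧ deriv u 0 = 0 ∧
      Tendsto u (nhdsWithin a (Set.Iio a)) atTop := by
  have hφ := continuous_dxdp u₀
  have hpos := dxdp_pos hu₀
  have hint := (integrable_dxdp u₀).integrableOn (s := Ioi 0)
  set X := primitiveFromZero (dxdp u₀)
  set a := ∫ q in Ioi 0, dxdp u₀ q
  set P := invFun X
  have hXa := primitiveFromZero_lt_integral_Ioi hφ hpos hint
  have ha : 0 < a := by simpa using hXa 0
  have hrange : Ioo (-a) a ⊆ range X := Ioo_subset_range_primitiveFromZero hφ (even_dxdp u₀) hint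
  have hP' x (hx : x ∈ Ioo (-a) a) : HasDerivAt P (dxdp u₀ (P x))⁻¹ x :=
    hasDerivAt_invFun (hasDerivAt_primitiveFromZero hφ) hpos isOpen_Ioo hrange hx
  have hu' x (hx : x ∈ Ioo (-a) a) : HasDerivAt (height u₀ ∘ P) (P x) x := by
    simpa [mul_assoc, (hpos _).ne'] using (hasDerivAt_height u₀ (P x)).comp x (hP' x hx)
  have hP0 : P 0 = 0 := by
    simpa using leftInverse_invFun (strictMono_primitiveFromZero hφ hpos).injective 0
  refine ⟨a, ha, height u₀ ∘ P, contDiffOn_two_of_hasDerivAt isOpen_Ioo hu'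
    (contDiffOn_invFun (hasDerivAt_primitiveFromZero hφ) hφ hpos isOpen_Ioo hrange),
    fun x hx => ⟨height_pos hu₀ _, ?_⟩, by simp [hP0],
    by rw [(hu' 0 ⟨neg_neg_of_pos ha, ha⟩).deriv, hP0], ?_⟩
  · have hderiv : deriv (height u₀ ∘ P) =ᶠ[𝓝 x] P := by
      filter_upwards [isOpen_Ioo.mem_nhds hx] with y hy using (hu' y hy).deriv
    rw [hderiv.deriv_eq, (hP' x hx).deriv, (hu' x hx).deriv, comp_apply, height_eq_mul_dxdp]
    field_simp [(hpos _).ne']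
  · exact (tendsto_height_atTop hu₀).comp (tendsto_invFun_nhdsLT
      (strictMono_primitiveFromZero hφ hpos) hXa
      (mem_of_superset (Ioo_mem_nhdsLT (neg_lt_self ha)) hrange))
end
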